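/- arXiv:2012.08144 — 2 statements merged into one kernel-verified Lean document; each statement's English description precedes it below -/
import Mathlib

section
/- Let m ≥ 5 and let i, j ∈ {1,2,3} with i ≠ j. Then y_1, z_1 and x_2 all belong to √(I_m^i + I_m^j); equivalently, √(I_m^i + I_m^j) contains the ideal ⟨x_0, x_1, x_2, y_0, y_1, z_0, z_1⟩. -/
noncomputable section

open MvPolynomial

/-- `R m = ℂ[x_0,…,x_m, y_0,…,y_m, z_0,…,z_m]`. -/
abbrev R (m : ℕ) : Type := MvPolynomial (Fin 3 × Fin (m + 1)) ℂ

/-- the variable `x_i` (for `i ≤ m`). -/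
def Xv (m i : ℕ) : R m := if h : i < m + 1 then X (0, ⟨i, h⟩) else 0
/-- the variable `y_i` (for `i ≤ m`). -/
def Yv (m i : ℕ) : R m := if h : i < m + 1 then X (1, ⟨i, h⟩) else 0
/-- the variable `z_i` (for `i ≤ m`). -/
def Zv (m i : ℕ) : R m := if h : i < m + 1 then X (2, ⟨i, h⟩) else 0

/-- `Σ_{i=0}^m x_i t^i`. -/
def xSer (m : ℕ) : Polynomial (R m) :=
  ∑ i ∈ Finset.range (m + 1), Polynomial.C (Xv m i) * Polynomial.X ^ i
/-- `Σ_{i=0}^m y_i t^i`. -/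
def ySer (m : ℕ) : Polynomial (R m) :=
  ∑ i ∈ Finset.range (m + 1), Polynomial.C (Yv m i) * Polynomial.X ^ i
/-- `Σ_{i=0}^m z_i t^i`. -/
def zSer (m : ℕ) : Polynomial (R m) :=
  ∑ i ∈ Finset.range (m + 1), Polynomial.C (Zv m i) * Polynomial.X ^ i

/-- `f^{(j)}`: the coefficient of `t^j` in
`f(Σ x_i t^i, Σ y_i t^i, Σ z_i t^i)` for `f = x² − y²z + z³` (the `D₄` singularity). -/
def fD (m j : ℕ) : R m :=
  (xSer m ^ 2 - ySer m ^ 2 * zSer m + zSer m ^ 3).coeff j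

/-- The ideal `⟨f^{(0)},…,f^{(m)}⟩`. -/
def FId (m : ℕ) : Ideal (R m) := Ideal.span {g | ∃ j ≤ m, g = fD m j}

/-- `I_m^0 = ⟨x_0, x_1, x_2, y_0, y_1, z_0, z_1, f^{(0)},…,f^{(m)}⟩`. -/
def I0 (m : ℕ) : Ideal (R m) :=
  Ideal.span {Xv m 0, Xv m 1, Xv m 2, Yv m 0, Yv m 1, Zv m 0, Zv m 1} ⊔ FId m

/-- `J_m^1 = ⟨x_0, x_1, y_0, z_0, z_1, f^{(0)},…,f^{(m)}⟩`,
`J_m^2 = ⟨x_0, x_1, y_0, z_0, y_1 − z_1, f^{(0)},…,f^{(m)}⟩`,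
`J_m^3 = ⟨x_0, x_1, y_0, z_0, y_1 + z_1, f^{(0)},…,f^{(m)}⟩`. -/
def Jd (m : ℕ) : ℕ → Ideal (R m)
  | 2 => Ideal.span {Xv m 0, Xv m 1, Yv m 0, Zv m 0, Yv m 1 - Zv m 1} ⊔ FId m
  | 3 => Ideal.span {Xv m 0, Xv m 1, Yv m 0, Zv m 0, Yv m 1 + Zv m 1} ⊔ FId m
  | _ => Ideal.span {Xv m 0, Xv m 1, Yv m 0, Zv m 0, Zv m 1} ⊔ FId m

/-- The contraction to `R_m` of the extension of `J` to the localization of `R_m`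
away from `g`. -/
def contrAway (m : ℕ) (g : R m) (J : Ideal (R m)) : Ideal (R m) :=
  (J.map (algebraMap (R m) (Localization.Away g))).comap
    (algebraMap (R m) (Localization.Away g))

/-- `I_m^0` and, for `i = 1,2,3`, the ideal `I_m^i`: the contraction to `R_m` of the
extension of `J_m^i` to the localization of `R_m` away from `y_1`. -/
def Idl (m i : ℕ) : Ideal (R m) :=
  if i = 0 then I0 m else contrAway m (Yv m 1) (Jd m i)


/-- coefficient of `xSer`. -/
lemma coeff_xSer (m k : ℕ) (h : k ≤ m) : (xSer m).coeff k = Xv m k := by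
  unfold xSer
  rw [Polynomial.finset_sum_coeff]
  simp [Polynomial.coeff_X_pow, Finset.sum_ite_eq, Nat.lt_succ_iff, h]

lemma coeff_ySer (m k : ℕ) (h : k ≤ m) : (ySer m).coeff k = Yv m k := by
  unfold ySer
  rw [Polynomial.finset_sum_coeff]
  simp [Polynomial.coeff_X_pow, Finset.sum_ite_eq, Nat.lt_succ_iff, h]

lemma coeff_zSer (m k : ℕ) (h : k ≤ m) : (zSer m).coeff k = Zv m k := by
  unfold zSer
  rw [Polynomial.finset_sum_coeff]
  simp [Polynomial.coeff_X_pow, Finset.sum_ite_eq, Nat.lt_succ_iff, h]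

/-- key identity expressing `x_2 ^ 2` as `f⁽⁴⁾` plus a combination of
`x_0, x_1, y_0, y_1, z_0, z_1`. -/
lemma key_identity (m : ℕ) (hm : 5 ≤ m) :
    Xv m 2 ^ 2 = fD m 4 + (-(2*Xv m 4)) * Xv m 0 + (-(2*Xv m 3)) * Xv m 1
      + (Yv m 0*Zv m 4 + 2*Yv m 1*Zv m 3 + 2*Yv m 2*Zv m 2 + 2*Yv m 3*Zv m 1 + 2*Yv m 4*Zv m 0) * Yv m 0
      + (Yv m 1*Zv m 2 + 2*Yv m 2*Zv m 1 + 2*Yv m 3*Zv m 0) * Yv m 1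
      + (Yv m 2*Yv m 2 - (3*Zv m 0*Zv m 4 + 4*Zv m 1*Zv m 3 + 3*Zv m 2*Zv m 2)) * Zv m 0
      + (-(2*Zv m 0*Zv m 3 + 3*Zv m 1*Zv m 2)) * Zv m 1 := by
  have h2 : ∀ p : Polynomial (R m), p^2 = p*p := fun p => sq p
  have h3 : ∀ p : Polynomial (R m), p^3 = p*p*p := fun p => by ring
  simp only [fD, h2, h3, Polynomial.coeff_add, Polynomial.coeff_sub, Polynomial.coeff_mul,
    Finset.Nat.sum_antidiagonal_eq_sum_range_succ_mk, Finset.sum_range_succ,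
    Finset.sum_range_zero,
    coeff_xSer m 0 (by omega), coeff_xSer m 1 (by omega), coeff_xSer m 2 (by omega),
    coeff_xSer m 3 (by omega), coeff_xSer m 4 (by omega),
    coeff_ySer m 0 (by omega), coeff_ySer m 1 (by omega), coeff_ySer m 2 (by omega),
    coeff_ySer m 3 (by omega), coeff_ySer m 4 (by omega),
    coeff_zSer m 0 (by omega), coeff_zSer m 1 (by omega), coeff_zSer m 2 (by omega),
    coeff_zSer m 3 (by omega), coeff_zSer m 4 (by omega)]
  ring

lemma half_mul (m : ℕ) (a : R m) : (C (1/2 : ℂ) : R m) * (a + a) = a := by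
  rw [← two_mul, ← mul_assoc, show ((2 : R m)) = C (2 : ℂ) from (map_ofNat C 2).symm,
    ← map_mul]
  norm_num

lemma Jd_le_Idl (m k : ℕ) (hk : k ≠ 0) : Jd m k ≤ Idl m k := by
  simp only [Idl, if_neg hk]
  exact Ideal.le_comap_map

lemma genJ (m k : ℕ) (hk : k = 1 ∨ k = 2 ∨ k = 3) :
    Xv m 0 ∈ Jd m k ∧ Xv m 1 ∈ Jd m k ∧ Yv m 0 ∈ Jd m k ∧ Zv m 0 ∈ Jd m k ∧
      FId m ≤ Jd m k := by
  rcases hk with rfl | rfl | rfl <;>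
    exact ⟨Ideal.mem_sup_left (Ideal.subset_span (by simp)),
      Ideal.mem_sup_left (Ideal.subset_span (by simp)),
      Ideal.mem_sup_left (Ideal.subset_span (by simp)),
      Ideal.mem_sup_left (Ideal.subset_span (by simp)), le_sup_right⟩

lemma gen5_1 (m : ℕ) : Zv m 1 ∈ Jd m 1 :=
  Ideal.mem_sup_left (Ideal.subset_span (by simp))

lemma gen5_2 (m : ℕ) : Yv m 1 - Zv m 1 ∈ Jd m 2 :=
  Ideal.mem_sup_left (Ideal.subset_span (by simp))

lemma gen5_3 (m : ℕ) : Yv m 1 + Zv m 1 ∈ Jd m 3 :=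
  Ideal.mem_sup_left (Ideal.subset_span (by simp))

lemma core (m : ℕ) (hm : 5 ≤ m) (K : Ideal (R m))
    (hx0 : Xv m 0 ∈ K) (hx1 : Xv m 1 ∈ K) (hy0 : Yv m 0 ∈ K) (hz0 : Zv m 0 ∈ K)
    (hF : FId m ≤ K) (hy : Yv m 1 ∈ K) (hz : Zv m 1 ∈ K) :
    Yv m 1 ∈ K.radical ∧ Zv m 1 ∈ K.radical ∧ Xv m 2 ∈ K.radical ∧
    Ideal.span {Xv m 0, Xv m 1, Xv m 2, Yv m 0, Yv m 1, Zv m 0, Zv m 1} ≤ K.radical := by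
  have hf4 : fD m 4 ∈ K := hF (Ideal.subset_span ⟨4, by omega, rfl⟩)
  have hx2 : Xv m 2 ∈ K.radical := by
    refine ⟨2, ?_⟩
    rw [key_identity m hm]
    exact add_mem (add_mem (add_mem (add_mem (add_mem (add_mem hf4
      (Ideal.mul_mem_left _ _ hx0)) (Ideal.mul_mem_left _ _ hx1))
      (Ideal.mul_mem_left _ _ hy0)) (Ideal.mul_mem_left _ _ hy))
      (Ideal.mul_mem_left _ _ hz0)) (Ideal.mul_mem_left _ _ hz)
  refine ⟨K.le_radical hy, K.le_radical hz, hx2, ?_⟩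
  rw [Ideal.span_le]
  intro g hg
  simp only [Set.mem_insert_iff, Set.mem_singleton_iff] at hg
  rcases hg with rfl | rfl | rfl | rfl | rfl | rfl | rfl
  · exact K.le_radical hx0
  · exact K.le_radical hx1
  · exact hx2
  · exact K.le_radical hy0
  · exact K.le_radical hy
  · exact K.le_radical hz0
  · exact K.le_radical hz

lemma pair_case (m : ℕ) (hm : 5 ≤ m) (a b : ℕ)
    (ha : a = 1 ∨ a = 2 ∨ a = 3)
    (hy : Yv m 1 ∈ Idl m a ⊔ Idl m b) (hz : Zv m 1 ∈ Idl m a ⊔ Idl m b) :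
    Yv m 1 ∈ (Idl m a ⊔ Idl m b).radical ∧
    Zv m 1 ∈ (Idl m a ⊔ Idl m b).radical ∧
    Xv m 2 ∈ (Idl m a ⊔ Idl m b).radical ∧
    Ideal.span {Xv m 0, Xv m 1, Xv m 2, Yv m 0, Yv m 1, Zv m 0, Zv m 1} ≤
      (Idl m a ⊔ Idl m b).radical := by
  have hle : Jd m a ≤ Idl m a ⊔ Idl m b :=
    le_trans (Jd_le_Idl m a (by rcases ha with rfl | rfl | rfl <;> norm_num)) le_sup_left
  obtain ⟨g0, g1, g2, g3, gF⟩ := genJ m a ha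
  exact core m hm _ (hle g0) (hle g1) (hle g2) (hle g3) (le_trans gF hle) hy hz

/- STATEMENT 16: for `m ≥ 5` and `i, j ∈ {1,2,3}` with `i ≠ j`, the elements
`y_1, z_1, x_2` all belong to `√(I_m^i + I_m^j)`; equivalently,
`√(I_m^i + I_m^j) ⊇ ⟨x_0, x_1, x_2, y_0, y_1, z_0, z_1⟩`. -/
theorem stmt16 (m : ℕ) (hm : 5 ≤ m) (i j : ℕ)
    (hi : i ∈ ({1, 2, 3} : Set ℕ)) (hj : j ∈ ({1, 2, 3} : Set ℕ)) (hij : i ≠ j) :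
    Yv m 1 ∈ (Idl m i ⊔ Idl m j).radical ∧
    Zv m 1 ∈ (Idl m i ⊔ Idl m j).radical ∧
    Xv m 2 ∈ (Idl m i ⊔ Idl m j).radical ∧
    Ideal.span {Xv m 0, Xv m 1, Xv m 2, Yv m 0, Yv m 1, Zv m 0, Zv m 1} ≤
      (Idl m i ⊔ Idl m j).radical := by
  have m1l : ∀ b : ℕ, Zv m 1 ∈ Idl m 1 ⊔ Idl m b :=
    fun b => Ideal.mem_sup_left (Jd_le_Idl m 1 one_ne_zero (gen5_1 m))
  have m1r : ∀ a : ℕ, Zv m 1 ∈ Idl m a ⊔ Idl m 1 :=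
    fun a => Ideal.mem_sup_right (Jd_le_Idl m 1 one_ne_zero (gen5_1 m))
  have m2l : ∀ b : ℕ, Yv m 1 - Zv m 1 ∈ Idl m 2 ⊔ Idl m b :=
    fun b => Ideal.mem_sup_left (Jd_le_Idl m 2 two_ne_zero (gen5_2 m))
  have m2r : ∀ a : ℕ, Yv m 1 - Zv m 1 ∈ Idl m a ⊔ Idl m 2 :=
    fun a => Ideal.mem_sup_right (Jd_le_Idl m 2 two_ne_zero (gen5_2 m))
  have m3l : ∀ b : ℕ, Yv m 1 + Zv m 1 ∈ Idl m 3 ⊔ Idl m b :=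
    fun b => Ideal.mem_sup_left (Jd_le_Idl m 3 three_ne_zero (gen5_3 m))
  have m3r : ∀ a : ℕ, Yv m 1 + Zv m 1 ∈ Idl m a ⊔ Idl m 3 :=
    fun a => Ideal.mem_sup_right (Jd_le_Idl m 3 three_ne_zero (gen5_3 m))
  have half_y : ∀ K : Ideal (R m), Yv m 1 - Zv m 1 ∈ K → Yv m 1 + Zv m 1 ∈ K →
      Yv m 1 ∈ K := by
    intro K hu hv
    have h := Ideal.mul_mem_left K (C (1/2 : ℂ)) (add_mem hu hv)
    rwa [show (Yv m 1 - Zv m 1) + (Yv m 1 + Zv m 1) = Yv m 1 + Yv m 1 by ring,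
      half_mul] at h
  have half_z : ∀ K : Ideal (R m), Yv m 1 - Zv m 1 ∈ K → Yv m 1 + Zv m 1 ∈ K →
      Zv m 1 ∈ K := by
    intro K hu hv
    have h := Ideal.mul_mem_left K (C (1/2 : ℂ)) (sub_mem hv hu)
    rwa [show (Yv m 1 + Zv m 1) - (Yv m 1 - Zv m 1) = Zv m 1 + Zv m 1 by ring,
      half_mul] at h
  simp only [Set.mem_insert_iff, Set.mem_singleton_iff] at hi hj
  rcases hi with rfl | rfl | rfl <;> rcases hj with rfl | rfl | rfl
  · exact absurd rfl hij
  · -- (1, 2)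
    refine pair_case m hm 1 2 (Or.inl rfl) ?_ (m1l 2)
    rw [show Yv m 1 = (Yv m 1 - Zv m 1) + Zv m 1 by ring]
    exact add_mem (m2r 1) (m1l 2)
  · -- (1, 3)
    refine pair_case m hm 1 3 (Or.inl rfl) ?_ (m1l 3)
    rw [show Yv m 1 = (Yv m 1 + Zv m 1) - Zv m 1 by ring]
    exact sub_mem (m3r 1) (m1l 3)
  · -- (2, 1)
    refine pair_case m hm 2 1 (Or.inr (Or.inl rfl)) ?_ (m1r 2)
    rw [show Yv m 1 = (Yv m 1 - Zv m 1) + Zv m 1 by ring]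
    exact add_mem (m2l 1) (m1r 2)
  · exact absurd rfl hij
  · -- (2, 3)
    exact pair_case m hm 2 3 (Or.inr (Or.inl rfl))
      (half_y _ (m2l 3) (m3r 2)) (half_z _ (m2l 3) (m3r 2))
  · -- (3, 1)
    refine pair_case m hm 3 1 (Or.inr (Or.inr rfl)) ?_ (m1r 3)
    rw [show Yv m 1 = (Yv m 1 + Zv m 1) - Zv m 1 by ring]
    exact sub_mem (m3l 1) (m1r 3)
  · -- (3, 2)
    exact pair_case m hm 3 2 (Or.inr (Or.inr rfl))
      (half_y _ (m2r 3) (m3l 2)) (half_z _ (m2r 3) (m3l 2))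
  · exact absurd rfl hij

end
end

section
/- Let m ≥ 5 and let i, j ∈ {1,2,3} with i ≠ j. Then Z_m^0 ∩ Z_m^i strictly contains Z_m^0 ∩ Z_m^i ∩ Z_m^j; equivalently, √(I_m^0 + I_m^i) is strictly contained in √(I_m^0 + I_m^i + I_m^j). -/
noncomputable section

open MvPolynomial

/-- Points of `ℂ^{3(m+1)}`. -/
abbrev Pt (m : ℕ) := Fin 3 × Fin (m + 1) → ℂ

/-- The zero locus in `ℂ^{3(m+1)}` of an ideal of `R_m`. -/
def zl (m : ℕ) (I : Ideal (R m)) : Set (Pt m) := {x | ∀ g ∈ I, eval x g = 0}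

/-- `Z_m^i ⊆ ℂ^{3(m+1)}`, the zero locus of `I_m^i`, for `i = 0,1,2,3`. -/
def Zd (m i : ℕ) : Set (Pt m) := zl m (Idl m i)


lemma Xv_eq (m i : ℕ) (h : i < m + 1) : Xv m i = X (0, ⟨i, h⟩) := dif_pos h
lemma Yv_eq (m i : ℕ) (h : i < m + 1) : Yv m i = X (1, ⟨i, h⟩) := dif_pos h
lemma Zv_eq (m i : ℕ) (h : i < m + 1) : Zv m i = X (2, ⟨i, h⟩) := dif_pos h

lemma coeff_ser (m : ℕ) (f : ℕ → R m) (k : ℕ) (h : k < m + 1) :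
    (∑ i ∈ Finset.range (m + 1), Polynomial.C (f i) * Polynomial.X ^ i).coeff k = f k := by
  rw [Polynomial.finset_sum_coeff, Finset.sum_eq_single k]
  · simp
  · intro b _ hb
    simp [Polynomial.coeff_C_mul, Polynomial.coeff_X_pow, Ne.symm hb]
  · intro hk; exact absurd (Finset.mem_range.mpr h) hk

lemma xSer_coeff (m k : ℕ) (h : k < m + 1) : (xSer m).coeff k = Xv m k := coeff_ser m _ k h
lemma ySer_coeff (m k : ℕ) (h : k < m + 1) : (ySer m).coeff k = Yv m k := coeff_ser m _ k h
lemma zSer_coeff (m k : ℕ) (h : k < m + 1) : (zSer m).coeff k = Zv m k := coeff_ser m _ k h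

lemma fD4_eq (m : ℕ) (hm : 5 ≤ m) : fD m 4 =
    2*Xv m 0*Xv m 4 + 2*Xv m 1*Xv m 3 + Xv m 2^2
    - (2*Yv m 0*Yv m 4*Zv m 0 + 2*Yv m 1*Yv m 3*Zv m 0 + Yv m 2^2*Zv m 0
       + 2*Yv m 0*Yv m 3*Zv m 1 + 2*Yv m 1*Yv m 2*Zv m 1
       + 2*Yv m 0*Yv m 2*Zv m 2 + Yv m 1^2*Zv m 2 + 2*Yv m 0*Yv m 1*Zv m 3
       + Yv m 0^2*Zv m 4)
    + (3*Zv m 0^2*Zv m 4 + 6*Zv m 0*Zv m 1*Zv m 3 + 3*Zv m 0*Zv m 2^2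
       + 3*Zv m 1^2*Zv m 2) := by
  have h0 : (0:ℕ) < m + 1 := by omega
  have h1 : (1:ℕ) < m + 1 := by omega
  have h2 : (2:ℕ) < m + 1 := by omega
  have h3 : (3:ℕ) < m + 1 := by omega
  have h4 : (4:ℕ) < m + 1 := by omega
  rw [fD]
  simp only [pow_succ, pow_zero, one_mul]
  simp only [Polynomial.coeff_add, Polynomial.coeff_sub, Polynomial.coeff_mul,
    Finset.Nat.sum_antidiagonal_eq_sum_range_succ_mk, Finset.sum_range_succ,
    Finset.sum_range_zero,
    xSer_coeff m 0 h0, xSer_coeff m 1 h1, xSer_coeff m 2 h2, xSer_coeff m 3 h3,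
    xSer_coeff m 4 h4,
    ySer_coeff m 0 h0, ySer_coeff m 1 h1, ySer_coeff m 2 h2, ySer_coeff m 3 h3,
    ySer_coeff m 4 h4,
    zSer_coeff m 0 h0, zSer_coeff m 1 h1, zSer_coeff m 2 h2, zSer_coeff m 3 h3,
    zSer_coeff m 4 h4]
  ring

lemma fD5_eq (m : ℕ) (hm : 5 ≤ m) : fD m 5 =
    2*Xv m 0*Xv m 5 + 2*Xv m 1*Xv m 4 + 2*Xv m 2*Xv m 3
    - (2*Yv m 0*Yv m 5*Zv m 0 + 2*Yv m 1*Yv m 4*Zv m 0 + 2*Yv m 2*Yv m 3*Zv m 0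
       + 2*Yv m 0*Yv m 4*Zv m 1 + 2*Yv m 1*Yv m 3*Zv m 1 + Yv m 2^2*Zv m 1
       + 2*Yv m 0*Yv m 3*Zv m 2 + 2*Yv m 1*Yv m 2*Zv m 2
       + 2*Yv m 0*Yv m 2*Zv m 3 + Yv m 1^2*Zv m 3 + 2*Yv m 0*Yv m 1*Zv m 4
       + Yv m 0^2*Zv m 5)
    + (6*Zv m 0*Zv m 1*Zv m 4 + 6*Zv m 0*Zv m 2*Zv m 3 + 3*Zv m 0^2*Zv m 5
       + 3*Zv m 1^2*Zv m 3 + 3*Zv m 1*Zv m 2^2) := by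
  have h0 : (0:ℕ) < m + 1 := by omega
  have h1 : (1:ℕ) < m + 1 := by omega
  have h2 : (2:ℕ) < m + 1 := by omega
  have h3 : (3:ℕ) < m + 1 := by omega
  have h4 : (4:ℕ) < m + 1 := by omega
  have h5 : (5:ℕ) < m + 1 := by omega
  rw [fD]
  simp only [pow_succ, pow_zero, one_mul]
  simp only [Polynomial.coeff_add, Polynomial.coeff_sub, Polynomial.coeff_mul,
    Finset.Nat.sum_antidiagonal_eq_sum_range_succ_mk, Finset.sum_range_succ,
    Finset.sum_range_zero,
    xSer_coeff m 0 h0, xSer_coeff m 1 h1, xSer_coeff m 2 h2, xSer_coeff m 3 h3,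
    xSer_coeff m 4 h4, xSer_coeff m 5 h5,
    ySer_coeff m 0 h0, ySer_coeff m 1 h1, ySer_coeff m 2 h2, ySer_coeff m 3 h3,
    ySer_coeff m 4 h4, ySer_coeff m 5 h5,
    zSer_coeff m 0 h0, zSer_coeff m 1 h1, zSer_coeff m 2 h2, zSer_coeff m 3 h3,
    zSer_coeff m 4 h4, zSer_coeff m 5 h5]
  ring


/-- witness distinguishing `Z_m^1`. -/
def G1 (m : ℕ) : R m :=
  (Yv m 1 * Zv m 3 + 2*Yv m 2*Zv m 2)^2 - 4*Xv m 3^2*Zv m 2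
/-- witness distinguishing `Z_m^2`. -/
def G2 (m : ℕ) : R m :=
  (2*Yv m 1*(Zv m 3 - Yv m 3) + (Zv m 2 - Yv m 2)*(3*Zv m 2 + Yv m 2))^2
    + 8*Xv m 3^2*(Zv m 2 - Yv m 2)
/-- witness distinguishing `Z_m^3`. -/
def G3 (m : ℕ) : R m :=
  (2*Yv m 1*(Zv m 3 + Yv m 3) - (Zv m 2 + Yv m 2)*(3*Zv m 2 - Yv m 2))^2
    + 8*Xv m 3^2*(Zv m 2 + Yv m 2)

def E41 (m : ℕ) : R m :=
  Xv m 0*(2*Xv m 4) + Xv m 1*(2*Xv m 3)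
  + Yv m 0*(-(2*Yv m 3*Zv m 1) - 2*Yv m 2*Zv m 2 - 2*Yv m 1*Zv m 3 - Yv m 0*Zv m 4)
  + Zv m 0*(-(2*Yv m 0*Yv m 4) - 2*Yv m 1*Yv m 3 - Yv m 2^2 + 3*Zv m 0*Zv m 4
      + 6*Zv m 1*Zv m 3 + 3*Zv m 2^2)
  + Zv m 1*(-(2*Yv m 1*Yv m 2) + 3*Zv m 1*Zv m 2)

def E51 (m : ℕ) : R m :=
  Xv m 0*(2*Xv m 5) + Xv m 1*(2*Xv m 4)
  + Yv m 0*(-(2*Yv m 4*Zv m 1) - 2*Yv m 3*Zv m 2 - 2*Yv m 2*Zv m 3 - 2*Yv m 1*Zv m 4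
      - Yv m 0*Zv m 5)
  + Zv m 0*(-(2*Yv m 0*Yv m 5) - 2*Yv m 1*Yv m 4 - 2*Yv m 2*Yv m 3 + 6*Zv m 1*Zv m 4
      + 6*Zv m 2*Zv m 3 + 3*Zv m 0*Zv m 5)
  + Zv m 1*(-(2*Yv m 1*Yv m 3) - Yv m 2^2 + 3*Zv m 1*Zv m 3 + 3*Zv m 2^2)

def E42 (m : ℕ) : R m :=
  Xv m 0*(2*Xv m 4) + Xv m 1*(2*Xv m 3)
  + Yv m 0*(-(2*Yv m 3*Zv m 1) - 2*Yv m 2*Zv m 2 - 2*Yv m 1*Zv m 3 - Yv m 0*Zv m 4)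
  + Zv m 0*(-(2*Yv m 0*Yv m 4) - 2*Yv m 1*Yv m 3 - Yv m 2^2 + 3*Zv m 0*Zv m 4
      + 6*Zv m 1*Zv m 3 + 3*Zv m 2^2)
  + (Yv m 1 - Zv m 1)*(2*Yv m 1*Yv m 2 - 6*Yv m 1*Zv m 2 + 3*Zv m 2*(Yv m 1 - Zv m 1))

def E52 (m : ℕ) : R m :=
  Xv m 0*(2*Xv m 5) + Xv m 1*(2*Xv m 4)
  + Yv m 0*(-(2*Yv m 4*Zv m 1) - 2*Yv m 3*Zv m 2 - 2*Yv m 2*Zv m 3 - 2*Yv m 1*Zv m 4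
      - Yv m 0*Zv m 5)
  + Zv m 0*(-(2*Yv m 0*Yv m 5) - 2*Yv m 1*Yv m 4 - 2*Yv m 2*Yv m 3 + 6*Zv m 1*Zv m 4
      + 6*Zv m 2*Zv m 3 + 3*Zv m 0*Zv m 5)
  + (Yv m 1 - Zv m 1)*(2*Yv m 1*Yv m 3 + Yv m 2^2 - 6*Yv m 1*Zv m 3
      + 3*Zv m 3*(Yv m 1 - Zv m 1) - 3*Zv m 2^2)

def E43 (m : ℕ) : R m :=
  Xv m 0*(2*Xv m 4) + Xv m 1*(2*Xv m 3)
  + Yv m 0*(-(2*Yv m 3*Zv m 1) - 2*Yv m 2*Zv m 2 - 2*Yv m 1*Zv m 3 - Yv m 0*Zv m 4)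
  + Zv m 0*(-(2*Yv m 0*Yv m 4) - 2*Yv m 1*Yv m 3 - Yv m 2^2 + 3*Zv m 0*Zv m 4
      + 6*Zv m 1*Zv m 3 + 3*Zv m 2^2)
  + (Yv m 1 + Zv m 1)*(-(2*Yv m 1*Yv m 2) - 6*Yv m 1*Zv m 2 + 3*Zv m 2*(Yv m 1 + Zv m 1))

def E53 (m : ℕ) : R m :=
  Xv m 0*(2*Xv m 5) + Xv m 1*(2*Xv m 4)
  + Yv m 0*(-(2*Yv m 4*Zv m 1) - 2*Yv m 3*Zv m 2 - 2*Yv m 2*Zv m 3 - 2*Yv m 1*Zv m 4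
      - Yv m 0*Zv m 5)
  + Zv m 0*(-(2*Yv m 0*Yv m 5) - 2*Yv m 1*Yv m 4 - 2*Yv m 2*Yv m 3 + 6*Zv m 1*Zv m 4
      + 6*Zv m 2*Zv m 3 + 3*Zv m 0*Zv m 5)
  + (Yv m 1 + Zv m 1)*(-(2*Yv m 1*Yv m 3) - Yv m 2^2 - 6*Yv m 1*Zv m 3
      + 3*Zv m 3*(Yv m 1 + Zv m 1) + 3*Zv m 2^2)

lemma mem_helper (m : ℕ) (hm : 5 ≤ m) (S : Set (R m)) (G E4 E5 : R m)
    (h4 : E4 ∈ Ideal.span S) (h5 : E5 ∈ Ideal.span S)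
    (hid : Yv m 1 ^ 2 * G = fD m 5 * (fD m 5 - 4*Xv m 2*Xv m 3 - 2*E5)
      + 4*Xv m 3^2 * fD m 4 + (E5*(4*Xv m 2*Xv m 3 + E5) - 4*Xv m 3^2*E4)) :
    Yv m 1 ^ 2 * G ∈ Ideal.span S ⊔ FId m := by
  have hf4 : fD m 4 ∈ Ideal.span S ⊔ FId m :=
    Ideal.mem_sup_right (Ideal.subset_span ⟨4, by omega, rfl⟩)
  have hf5 : fD m 5 ∈ Ideal.span S ⊔ FId m :=
    Ideal.mem_sup_right (Ideal.subset_span ⟨5, hm, rfl⟩)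
  rw [hid]
  exact add_mem (add_mem (Ideal.mul_mem_right _ _ hf5) (Ideal.mul_mem_left _ _ hf4))
    (sub_mem (Ideal.mul_mem_right _ _ (Ideal.mem_sup_left h5))
      (Ideal.mul_mem_left _ _ (Ideal.mem_sup_left h4)))

lemma bucket_mem (m : ℕ) (a b c d e c1 c2 c3 c4 c5 : R m) :
    a*c1 + b*c2 + c*c3 + d*c4 + e*c5 ∈ Ideal.span ({a, b, c, d, e} : Set (R m)) := by
  refine add_mem (add_mem (add_mem (add_mem ?_ ?_) ?_) ?_) ?_ <;>
    exact Ideal.mul_mem_right _ _ (Ideal.subset_span (by simp))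

lemma memJ1 (m : ℕ) (hm : 5 ≤ m) : Yv m 1 ^ 2 * G1 m ∈ Jd m 1 := by
  show _ ∈ Ideal.span {Xv m 0, Xv m 1, Yv m 0, Zv m 0, Zv m 1} ⊔ FId m
  refine mem_helper m hm _ _ (E41 m) (E51 m) (bucket_mem m _ _ _ _ _ _ _ _ _ _)
    (bucket_mem m _ _ _ _ _ _ _ _ _ _) ?_
  rw [fD4_eq m hm, fD5_eq m hm]
  simp only [G1, E41, E51]
  ring

lemma memJ2 (m : ℕ) (hm : 5 ≤ m) : Yv m 1 ^ 2 * G2 m ∈ Jd m 2 := by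
  show _ ∈ Ideal.span {Xv m 0, Xv m 1, Yv m 0, Zv m 0, Yv m 1 - Zv m 1} ⊔ FId m
  refine mem_helper m hm _ _ (E42 m) (E52 m) (bucket_mem m _ _ _ _ _ _ _ _ _ _)
    (bucket_mem m _ _ _ _ _ _ _ _ _ _) ?_
  rw [fD4_eq m hm, fD5_eq m hm]
  simp only [G2, E42, E52]
  ring

lemma memJ3 (m : ℕ) (hm : 5 ≤ m) : Yv m 1 ^ 2 * G3 m ∈ Jd m 3 := by
  show _ ∈ Ideal.span {Xv m 0, Xv m 1, Yv m 0, Zv m 0, Yv m 1 + Zv m 1} ⊔ FId m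
  refine mem_helper m hm _ _ (E43 m) (E53 m) (bucket_mem m _ _ _ _ _ _ _ _ _ _)
    (bucket_mem m _ _ _ _ _ _ _ _ _ _) ?_
  rw [fD4_eq m hm, fD5_eq m hm]
  simp only [G3, E43, E53]
  ring


/-- `base m w` = value of the arc coefficient: `ε` at index 1, `1` at index 2, `0` else. -/
def base (m : ℕ) : Fin (m+1) → Polynomial ℂ :=
  fun w => if (w : ℕ) = 1 then Polynomial.X else if (w : ℕ) = 2 then 1 else 0

/-- arc family for `J¹`: `x = 0, z = 0, y = εt + t²`. -/
def ph1 (m : ℕ) : Fin 3 × Fin (m+1) → Polynomial ℂ := fun v => ![0, 1, 0] v.1 * base m v.2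
/-- arc family for `J²`: `x = 0, y = z = εt + t²`. -/
def ph2 (m : ℕ) : Fin 3 × Fin (m+1) → Polynomial ℂ := fun v => ![0, 1, 1] v.1 * base m v.2
/-- arc family for `J³`: `x = 0, y = εt + t², z = -y`. -/
def ph3 (m : ℕ) : Fin 3 × Fin (m+1) → Polynomial ℂ := fun v => ![0, 1, -1] v.1 * base m v.2

lemma map_ser (m : ℕ) (φ : Fin 3 × Fin (m+1) → Polynomial ℂ) (f : ℕ → R m) :
    ((∑ i ∈ Finset.range (m + 1), Polynomial.C (f i) * Polynomial.X ^ i).map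
      ((aeval φ : R m →ₐ[ℂ] Polynomial ℂ) : R m →+* Polynomial ℂ))
    = ∑ i ∈ Finset.range (m + 1), Polynomial.C (aeval φ (f i)) * Polynomial.X ^ i := by
  rw [← Polynomial.coe_mapRingHom, map_sum]
  refine Finset.sum_congr rfl fun i _ => ?_
  simp

-- `x`-variables die under all three families
lemma ph1_x (m i : ℕ) : aeval (ph1 m) (Xv m i) = 0 := by
  unfold Xv; split <;> simp [ph1]
lemma ph2_x (m i : ℕ) : aeval (ph2 m) (Xv m i) = 0 := by
  unfold Xv; split <;> simp [ph2]
lemma ph3_x (m i : ℕ) : aeval (ph3 m) (Xv m i) = 0 := by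
  unfold Xv; split <;> simp [ph3]
lemma ph1_z (m i : ℕ) : aeval (ph1 m) (Zv m i) = 0 := by
  unfold Zv; split <;> simp [ph1]
lemma ph2_yz (m i : ℕ) : aeval (ph2 m) (Zv m i) = aeval (ph2 m) (Yv m i) := by
  unfold Zv Yv; split <;> simp [ph2]
lemma ph3_yz (m i : ℕ) : aeval (ph3 m) (Zv m i) = -aeval (ph3 m) (Yv m i) := by
  unfold Zv Yv; split <;> simp [ph3]

lemma ph1_fD (m j : ℕ) : aeval (ph1 m) (fD m j) = 0 := by
  have hco := Polynomial.coeff_map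
    (f := ((aeval (ph1 m) : R m →ₐ[ℂ] Polynomial ℂ) : R m →+* Polynomial ℂ))
    (p := xSer m ^ 2 - ySer m ^ 2 * zSer m + zSer m ^ 3) (n := j)
  rw [fD]
  refine hco.symm.trans ?_
  rw [Polynomial.map_add, Polynomial.map_sub, Polynomial.map_pow,
    Polynomial.map_mul, Polynomial.map_pow, Polynomial.map_pow]
  have hx : (xSer m).map ((aeval (ph1 m) : R m →ₐ[ℂ] Polynomial ℂ) : R m →+* Polynomial ℂ) = 0 := by
    rw [xSer, map_ser]
    exact Finset.sum_eq_zero fun i _ => by rw [ph1_x]; simp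
  have hz : (zSer m).map ((aeval (ph1 m) : R m →ₐ[ℂ] Polynomial ℂ) : R m →+* Polynomial ℂ) = 0 := by
    rw [zSer, map_ser]
    exact Finset.sum_eq_zero fun i _ => by rw [ph1_z]; simp
  rw [hx, hz]
  have : (0:Polynomial (Polynomial ℂ)) ^ 2
      - ((ySer m).map ((aeval (ph1 m) : R m →ₐ[ℂ] Polynomial ℂ) : R m →+* Polynomial ℂ)) ^ 2 * 0
      + 0 ^ 3 = 0 := by ring
  rw [this, Polynomial.coeff_zero]

lemma ph2_fD (m j : ℕ) : aeval (ph2 m) (fD m j) = 0 := by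
  have hco := Polynomial.coeff_map
    (f := ((aeval (ph2 m) : R m →ₐ[ℂ] Polynomial ℂ) : R m →+* Polynomial ℂ))
    (p := xSer m ^ 2 - ySer m ^ 2 * zSer m + zSer m ^ 3) (n := j)
  rw [fD]
  refine hco.symm.trans ?_
  rw [Polynomial.map_add, Polynomial.map_sub, Polynomial.map_pow,
    Polynomial.map_mul, Polynomial.map_pow, Polynomial.map_pow]
  have hx : (xSer m).map ((aeval (ph2 m) : R m →ₐ[ℂ] Polynomial ℂ) : R m →+* Polynomial ℂ) = 0 := by
    rw [xSer, map_ser]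
    exact Finset.sum_eq_zero fun i _ => by rw [ph2_x]; simp
  have hz : (zSer m).map ((aeval (ph2 m) : R m →ₐ[ℂ] Polynomial ℂ) : R m →+* Polynomial ℂ)
      = (ySer m).map ((aeval (ph2 m) : R m →ₐ[ℂ] Polynomial ℂ) : R m →+* Polynomial ℂ) := by
    rw [zSer, ySer, map_ser, map_ser]
    exact Finset.sum_congr rfl fun i _ => by rw [ph2_yz]
  rw [hx, hz]
  have : (0:Polynomial (Polynomial ℂ)) ^ 2
      - ((ySer m).map ((aeval (ph2 m) : R m →ₐ[ℂ] Polynomial ℂ) : R m →+* Polynomial ℂ)) ^ 2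
        * ((ySer m).map ((aeval (ph2 m) : R m →ₐ[ℂ] Polynomial ℂ) : R m →+* Polynomial ℂ))
      + ((ySer m).map ((aeval (ph2 m) : R m →ₐ[ℂ] Polynomial ℂ) : R m →+* Polynomial ℂ)) ^ 3
      = 0 := by ring
  rw [this, Polynomial.coeff_zero]

lemma ph3_fD (m j : ℕ) : aeval (ph3 m) (fD m j) = 0 := by
  have hco := Polynomial.coeff_map
    (f := ((aeval (ph3 m) : R m →ₐ[ℂ] Polynomial ℂ) : R m →+* Polynomial ℂ))
    (p := xSer m ^ 2 - ySer m ^ 2 * zSer m + zSer m ^ 3) (n := j)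
  rw [fD]
  refine hco.symm.trans ?_
  rw [Polynomial.map_add, Polynomial.map_sub, Polynomial.map_pow,
    Polynomial.map_mul, Polynomial.map_pow, Polynomial.map_pow]
  have hx : (xSer m).map ((aeval (ph3 m) : R m →ₐ[ℂ] Polynomial ℂ) : R m →+* Polynomial ℂ) = 0 := by
    rw [xSer, map_ser]
    exact Finset.sum_eq_zero fun i _ => by rw [ph3_x]; simp
  have hz : (zSer m).map ((aeval (ph3 m) : R m →ₐ[ℂ] Polynomial ℂ) : R m →+* Polynomial ℂ)
      = -((ySer m).map ((aeval (ph3 m) : R m →ₐ[ℂ] Polynomial ℂ) : R m →+* Polynomial ℂ)) := by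
    rw [zSer, ySer, map_ser, map_ser, ← Finset.sum_neg_distrib]
    exact Finset.sum_congr rfl fun i _ => by rw [ph3_yz]; simp; ring
  rw [hx, hz]
  have : (0:Polynomial (Polynomial ℂ)) ^ 2
      - ((ySer m).map ((aeval (ph3 m) : R m →ₐ[ℂ] Polynomial ℂ) : R m →+* Polynomial ℂ)) ^ 2
        * (-((ySer m).map ((aeval (ph3 m) : R m →ₐ[ℂ] Polynomial ℂ) : R m →+* Polynomial ℂ)))
      + (-((ySer m).map ((aeval (ph3 m) : R m →ₐ[ℂ] Polynomial ℂ) : R m →+* Polynomial ℂ))) ^ 3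
      = 0 := by ring
  rw [this, Polynomial.coeff_zero]


lemma eval_aeval (m : ℕ) (φ : Fin 3 × Fin (m+1) → Polynomial ℂ) (g : R m) :
    eval (fun v => (φ v).eval 0) g = Polynomial.eval 0 (aeval φ g) := by
  have h : (Polynomial.evalRingHom (0:ℂ)).comp
        ((aeval φ : R m →ₐ[ℂ] Polynomial ℂ) : R m →+* Polynomial ℂ)
      = (eval (fun v => (φ v).eval 0) : R m →+* ℂ) := by
    apply MvPolynomial.ringHom_ext
    · intro a; simp [Polynomial.algebraMap_eq]
    · intro v; simp
  exact (DFunLike.congr_fun h g).symm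

lemma Yv1_ne (m : ℕ) (hm : 5 ≤ m) : Yv m 1 ≠ 0 := by
  rw [Yv_eq m 1 (by omega)]
  exact MvPolynomial.X_ne_zero _

/-- membership in the contraction from a power-multiple membership. -/
lemma mem_contr (m : ℕ) (hm : 5 ≤ m) (J : Ideal (R m)) (a : R m) (n : ℕ)
    (h : Yv m 1 ^ n * a ∈ J) : a ∈ contrAway m (Yv m 1) J := by
  rw [contrAway, Ideal.mem_comap]
  have h1 : algebraMap (R m) (Localization.Away (Yv m 1)) (Yv m 1 ^ n * a) ∈
      J.map (algebraMap (R m) (Localization.Away (Yv m 1))) := Ideal.mem_map_of_mem _ h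
  rw [map_mul] at h1
  have hu : IsUnit (algebraMap (R m) (Localization.Away (Yv m 1)) (Yv m 1 ^ n)) :=
    IsLocalization.map_units (M := Submonoid.powers (Yv m 1)) _ ⟨Yv m 1 ^ n, ⟨n, rfl⟩⟩
  exact (Ideal.unit_mul_mem_iff_mem _ hu).mp h1

/-- a membership in the contraction yields a power-multiple membership. -/
lemma contr_mem (m : ℕ) (hm : 5 ≤ m) (J : Ideal (R m)) (a : R m)
    (h : a ∈ contrAway m (Yv m 1) J) : ∃ n, Yv m 1 ^ n * a ∈ J := by
  rw [contrAway, Ideal.mem_comap,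
    IsLocalization.mem_map_algebraMap_iff (Submonoid.powers (Yv m 1))] at h
  obtain ⟨⟨b, s⟩, hs⟩ := h
  have hinj : Function.Injective (algebraMap (R m) (Localization.Away (Yv m 1))) :=
    IsLocalization.injective _ (powers_le_nonZeroDivisors_of_noZeroDivisors (Yv1_ne m hm))
  obtain ⟨n, hn⟩ := s.2
  refine ⟨n, ?_⟩
  have hab : a * s.1 = b.1 := hinj (by rw [map_mul]; exact hs)
  rw [← hn] at hab
  rw [show Yv m 1 ^ n * a = a * Yv m 1 ^ n by ring, hab]
  exact b.2

/-- generic vanishing of the contracted ideal on the limit point of an arc family. -/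
lemma vanish_contr (m : ℕ) (hm : 5 ≤ m) (k : ℕ) (hk : k ≠ 0)
    (φ : Fin 3 × Fin (m+1) → Polynomial ℂ)
    (hker : ∀ g ∈ Jd m k, aeval φ g = 0)
    (hy1 : aeval φ (Yv m 1) = Polynomial.X) :
    ∀ g ∈ Idl m k, eval (fun v => (φ v).eval 0) g = 0 := by
  intro g hg
  rw [Idl, if_neg hk] at hg
  obtain ⟨n, hn⟩ := contr_mem m hm _ g hg
  have h0 : aeval φ (Yv m 1 ^ n * g) = 0 := hker _ hn
  rw [map_mul, map_pow, hy1] at h0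
  have hgz : aeval φ g = 0 := by
    rcases mul_eq_zero.mp h0 with h | h
    · exact absurd h (pow_ne_zero _ Polynomial.X_ne_zero)
    · exact h
  rw [eval_aeval, hgz, Polynomial.eval_zero]

/-- generic vanishing of `I⁰` on the limit point of an arc family. -/
lemma vanish_I0 (m : ℕ) (φ : Fin 3 × Fin (m+1) → Polynomial ℂ)
    (hlin : ∀ g ∈ ({Xv m 0, Xv m 1, Xv m 2, Yv m 0, Yv m 1, Zv m 0, Zv m 1} : Set (R m)),
      Polynomial.eval 0 (aeval φ g) = 0)
    (hfD : ∀ j, aeval φ (fD m j) = 0) :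
    ∀ g ∈ Idl m 0, eval (fun v => (φ v).eval 0) g = 0 := by
  have hle : Idl m 0 ≤ RingHom.ker (eval (fun v => (φ v).eval 0) : R m →+* ℂ) := by
    rw [Idl, if_pos rfl, I0]
    refine sup_le (Ideal.span_le.mpr ?_) (Ideal.span_le.mpr ?_)
    · intro g hgS
      rw [SetLike.mem_coe, RingHom.mem_ker, eval_aeval]
      exact hlin g hgS
    · rintro g ⟨j, hj, rfl⟩
      rw [SetLike.mem_coe, RingHom.mem_ker, eval_aeval, hfD j, Polynomial.eval_zero]
  exact fun g hg => hle hg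


lemma ker1 (m : ℕ) : ∀ g ∈ Jd m 1, aeval (ph1 m) g = 0 := by
  have hle : Jd m 1 ≤ RingHom.ker ((aeval (ph1 m) : R m →ₐ[ℂ] Polynomial ℂ) :
      R m →+* Polynomial ℂ) := by
    show Ideal.span {Xv m 0, Xv m 1, Yv m 0, Zv m 0, Zv m 1} ⊔ FId m ≤ _
    refine sup_le (Ideal.span_le.mpr ?_) (Ideal.span_le.mpr ?_)
    · intro g hg
      simp only [Set.mem_insert_iff, Set.mem_singleton_iff] at hg
      rw [SetLike.mem_coe, RingHom.mem_ker]
      rcases hg with rfl | rfl | rfl | rfl | rfl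
      · exact ph1_x m 0
      · exact ph1_x m 1
      · rw [Yv_eq m 0 (Nat.succ_pos m)]; simp [ph1, base]
      · exact ph1_z m 0
      · exact ph1_z m 1
    · rintro g ⟨j, hj, rfl⟩
      rw [SetLike.mem_coe, RingHom.mem_ker]
      exact ph1_fD m j
  exact fun g hg => hle hg

lemma ker2 (m : ℕ) : ∀ g ∈ Jd m 2, aeval (ph2 m) g = 0 := by
  have hle : Jd m 2 ≤ RingHom.ker ((aeval (ph2 m) : R m →ₐ[ℂ] Polynomial ℂ) :
      R m →+* Polynomial ℂ) := by
    show Ideal.span {Xv m 0, Xv m 1, Yv m 0, Zv m 0, Yv m 1 - Zv m 1} ⊔ FId m ≤ _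
    refine sup_le (Ideal.span_le.mpr ?_) (Ideal.span_le.mpr ?_)
    · intro g hg
      simp only [Set.mem_insert_iff, Set.mem_singleton_iff] at hg
      rw [SetLike.mem_coe, RingHom.mem_ker]
      rcases hg with rfl | rfl | rfl | rfl | rfl
      · exact ph2_x m 0
      · exact ph2_x m 1
      · rw [Yv_eq m 0 (Nat.succ_pos m)]; simp [ph2, base]
      · rw [Zv_eq m 0 (Nat.succ_pos m)]; simp [ph2, base]
      · rw [map_sub]
        show aeval (ph2 m) (Yv m 1) - aeval (ph2 m) (Zv m 1) = 0
        rw [ph2_yz m 1]; ring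
    · rintro g ⟨j, hj, rfl⟩
      rw [SetLike.mem_coe, RingHom.mem_ker]
      exact ph2_fD m j
  exact fun g hg => hle hg

lemma ker3 (m : ℕ) : ∀ g ∈ Jd m 3, aeval (ph3 m) g = 0 := by
  have hle : Jd m 3 ≤ RingHom.ker ((aeval (ph3 m) : R m →ₐ[ℂ] Polynomial ℂ) :
      R m →+* Polynomial ℂ) := by
    show Ideal.span {Xv m 0, Xv m 1, Yv m 0, Zv m 0, Yv m 1 + Zv m 1} ⊔ FId m ≤ _
    refine sup_le (Ideal.span_le.mpr ?_) (Ideal.span_le.mpr ?_)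
    · intro g hg
      simp only [Set.mem_insert_iff, Set.mem_singleton_iff] at hg
      rw [SetLike.mem_coe, RingHom.mem_ker]
      rcases hg with rfl | rfl | rfl | rfl | rfl
      · exact ph3_x m 0
      · exact ph3_x m 1
      · rw [Yv_eq m 0 (Nat.succ_pos m)]; simp [ph3, base]
      · rw [Zv_eq m 0 (Nat.succ_pos m)]; simp [ph3, base]
      · rw [map_add]
        show aeval (ph3 m) (Yv m 1) + aeval (ph3 m) (Zv m 1) = 0
        rw [ph3_yz m 1]; ring
    · rintro g ⟨j, hj, rfl⟩
      rw [SetLike.mem_coe, RingHom.mem_ker]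
      exact ph3_fD m j
  exact fun g hg => hle hg

lemma hy1_1 (m : ℕ) (hm : 5 ≤ m) : aeval (ph1 m) (Yv m 1) = Polynomial.X := by
  rw [Yv_eq m 1 (by omega)]; simp [ph1, base]
lemma hy1_2 (m : ℕ) (hm : 5 ≤ m) : aeval (ph2 m) (Yv m 1) = Polynomial.X := by
  rw [Yv_eq m 1 (by omega)]; simp [ph2, base]
lemma hy1_3 (m : ℕ) (hm : 5 ≤ m) : aeval (ph3 m) (Yv m 1) = Polynomial.X := by
  rw [Yv_eq m 1 (by omega)]; simp [ph3, base]

lemma lin1 (m : ℕ) (hm : 5 ≤ m) :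
    ∀ g ∈ ({Xv m 0, Xv m 1, Xv m 2, Yv m 0, Yv m 1, Zv m 0, Zv m 1} : Set (R m)),
      Polynomial.eval 0 (aeval (ph1 m) g) = 0 := by
  intro g hg
  simp only [Set.mem_insert_iff, Set.mem_singleton_iff] at hg
  rcases hg with rfl | rfl | rfl | rfl | rfl | rfl | rfl
  · rw [ph1_x m 0]; simp
  · rw [ph1_x m 1]; simp
  · rw [ph1_x m 2]; simp
  · rw [Yv_eq m 0 (Nat.succ_pos m)]; simp [ph1, base]
  · rw [hy1_1 m hm]; simp
  · rw [ph1_z m 0]; simp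
  · rw [ph1_z m 1]; simp

lemma lin2 (m : ℕ) (hm : 5 ≤ m) :
    ∀ g ∈ ({Xv m 0, Xv m 1, Xv m 2, Yv m 0, Yv m 1, Zv m 0, Zv m 1} : Set (R m)),
      Polynomial.eval 0 (aeval (ph2 m) g) = 0 := by
  intro g hg
  simp only [Set.mem_insert_iff, Set.mem_singleton_iff] at hg
  rcases hg with rfl | rfl | rfl | rfl | rfl | rfl | rfl
  · rw [ph2_x m 0]; simp
  · rw [ph2_x m 1]; simp
  · rw [ph2_x m 2]; simp
  · rw [Yv_eq m 0 (Nat.succ_pos m)]; simp [ph2, base]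
  · rw [hy1_2 m hm]; simp
  · rw [Zv_eq m 0 (Nat.succ_pos m)]; simp [ph2, base]
  · rw [ph2_yz m 1, hy1_2 m hm]; simp

lemma lin3 (m : ℕ) (hm : 5 ≤ m) :
    ∀ g ∈ ({Xv m 0, Xv m 1, Xv m 2, Yv m 0, Yv m 1, Zv m 0, Zv m 1} : Set (R m)),
      Polynomial.eval 0 (aeval (ph3 m) g) = 0 := by
  intro g hg
  simp only [Set.mem_insert_iff, Set.mem_singleton_iff] at hg
  rcases hg with rfl | rfl | rfl | rfl | rfl | rfl | rfl
  · rw [ph3_x m 0]; simp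
  · rw [ph3_x m 1]; simp
  · rw [ph3_x m 2]; simp
  · rw [Yv_eq m 0 (Nat.succ_pos m)]; simp [ph3, base]
  · rw [hy1_3 m hm]; simp
  · rw [Zv_eq m 0 (Nat.succ_pos m)]; simp [ph3, base]
  · rw [ph3_yz m 1, hy1_3 m hm]; simp

lemma G1_mem (m : ℕ) (hm : 5 ≤ m) : G1 m ∈ Idl m 1 := by
  rw [Idl, if_neg (by norm_num : (1:ℕ) ≠ 0)]
  exact mem_contr m hm _ _ 2 (memJ1 m hm)
lemma G2_mem (m : ℕ) (hm : 5 ≤ m) : G2 m ∈ Idl m 2 := by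
  rw [Idl, if_neg (by norm_num : (2:ℕ) ≠ 0)]
  exact mem_contr m hm _ _ 2 (memJ2 m hm)
lemma G3_mem (m : ℕ) (hm : 5 ≤ m) : G3 m ∈ Idl m 3 := by
  rw [Idl, if_neg (by norm_num : (3:ℕ) ≠ 0)]
  exact mem_contr m hm _ _ 2 (memJ3 m hm)

lemma ev_G1_p2 (m : ℕ) (hm : 5 ≤ m) :
    eval (fun v => ((ph2 m) v).eval 0) (G1 m) = 4 := by
  have h1 : (1:ℕ) < m+1 := by omega
  have h2 : (2:ℕ) < m+1 := by omega
  have h3 : (3:ℕ) < m+1 := by omega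
  rw [G1, Xv_eq m 3 h3, Yv_eq m 1 h1, Yv_eq m 2 h2, Zv_eq m 2 h2, Zv_eq m 3 h3]
  simp [ph2, base]
  try norm_num

lemma ev_G1_p3 (m : ℕ) (hm : 5 ≤ m) :
    eval (fun v => ((ph3 m) v).eval 0) (G1 m) = 4 := by
  have h1 : (1:ℕ) < m+1 := by omega
  have h2 : (2:ℕ) < m+1 := by omega
  have h3 : (3:ℕ) < m+1 := by omega
  rw [G1, Xv_eq m 3 h3, Yv_eq m 1 h1, Yv_eq m 2 h2, Zv_eq m 2 h2, Zv_eq m 3 h3]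
  simp [ph3, base]
  try norm_num

lemma ev_G2_p1 (m : ℕ) (hm : 5 ≤ m) :
    eval (fun v => ((ph1 m) v).eval 0) (G2 m) = 1 := by
  have h1 : (1:ℕ) < m+1 := by omega
  have h2 : (2:ℕ) < m+1 := by omega
  have h3 : (3:ℕ) < m+1 := by omega
  rw [G2, Xv_eq m 3 h3, Yv_eq m 1 h1, Yv_eq m 2 h2, Yv_eq m 3 h3,
    Zv_eq m 2 h2, Zv_eq m 3 h3]
  simp [ph1, base]
  try norm_num

lemma ev_G2_p3 (m : ℕ) (hm : 5 ≤ m) :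
    eval (fun v => ((ph3 m) v).eval 0) (G2 m) = 16 := by
  have h1 : (1:ℕ) < m+1 := by omega
  have h2 : (2:ℕ) < m+1 := by omega
  have h3 : (3:ℕ) < m+1 := by omega
  rw [G2, Xv_eq m 3 h3, Yv_eq m 1 h1, Yv_eq m 2 h2, Yv_eq m 3 h3,
    Zv_eq m 2 h2, Zv_eq m 3 h3]
  simp [ph3, base]
  try norm_num

lemma ev_G3_p1 (m : ℕ) (hm : 5 ≤ m) :
    eval (fun v => ((ph1 m) v).eval 0) (G3 m) = 1 := by
  have h1 : (1:ℕ) < m+1 := by omega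
  have h2 : (2:ℕ) < m+1 := by omega
  have h3 : (3:ℕ) < m+1 := by omega
  rw [G3, Xv_eq m 3 h3, Yv_eq m 1 h1, Yv_eq m 2 h2, Yv_eq m 3 h3,
    Zv_eq m 2 h2, Zv_eq m 3 h3]
  simp [ph1, base]
  try norm_num

lemma ev_G3_p2 (m : ℕ) (hm : 5 ≤ m) :
    eval (fun v => ((ph2 m) v).eval 0) (G3 m) = 16 := by
  have h1 : (1:ℕ) < m+1 := by omega
  have h2 : (2:ℕ) < m+1 := by omega
  have h3 : (3:ℕ) < m+1 := by omega
  rw [G3, Xv_eq m 3 h3, Yv_eq m 1 h1, Yv_eq m 2 h2, Yv_eq m 3 h3,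
    Zv_eq m 2 h2, Zv_eq m 3 h3]
  simp [ph2, base]
  try norm_num

/-- the common final step. -/
lemma final (m i j : ℕ) (p : Pt m) (G : R m)
    (h0 : ∀ g ∈ Idl m 0, eval p g = 0) (hiv : ∀ g ∈ Idl m i, eval p g = 0)
    (hG : G ∈ Idl m j) (hGp : eval p G ≠ 0) :
    Zd m 0 ∩ Zd m i ∩ Zd m j ⊂ Zd m 0 ∩ Zd m i ∧
    (Idl m 0 ⊔ Idl m i).radical < (Idl m 0 ⊔ Idl m i ⊔ Idl m j).radical := by
  have hpZ : p ∈ Zd m 0 ∩ Zd m i := ⟨h0, hiv⟩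
  have hpnot : p ∉ Zd m j := fun h => hGp (h G hG)
  constructor
  · rw [Set.ssubset_def]
    refine ⟨Set.inter_subset_left, fun hsub => hpnot (hsub hpZ).2⟩
  · have hle : (Idl m 0 ⊔ Idl m i).radical ≤ (Idl m 0 ⊔ Idl m i ⊔ Idl m j).radical :=
      Ideal.radical_mono le_sup_left
    have hGin : G ∈ (Idl m 0 ⊔ Idl m i ⊔ Idl m j).radical :=
      Ideal.le_radical (Ideal.mem_sup_right hG)
    have hGout : G ∉ (Idl m 0 ⊔ Idl m i).radical := by
      intro hmem
      obtain ⟨n, hn⟩ := hmem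
      rw [Submodule.mem_sup] at hn
      obtain ⟨a, ha, b, hb, hab⟩ := hn
      have hev : eval p G ^ n = 0 := by
        rw [← map_pow, ← hab, map_add, h0 a ha, hiv b hb, add_zero]
      rcases pow_eq_zero_iff'.mp hev with ⟨h1, -⟩
      exact hGp h1
    exact lt_of_le_of_ne hle fun he => hGout (he ▸ hGin)


/- STATEMENT 18: for `m ≥ 5` and `i, j ∈ {1,2,3}` with `i ≠ j`,
`Z_m^0 ∩ Z_m^i ⊋ Z_m^0 ∩ Z_m^i ∩ Z_m^j`; equivalently
`√(I_m^0 + I_m^i) ⊊ √(I_m^0 + I_m^i + I_m^j)`. -/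
theorem stmt18 (m : ℕ) (hm : 5 ≤ m) (i j : ℕ)
    (hi : i ∈ ({1, 2, 3} : Set ℕ)) (hj : j ∈ ({1, 2, 3} : Set ℕ)) (hij : i ≠ j) :
    Zd m 0 ∩ Zd m i ∩ Zd m j ⊂ Zd m 0 ∩ Zd m i ∧
    (Idl m 0 ⊔ Idl m i).radical < (Idl m 0 ⊔ Idl m i ⊔ Idl m j).radical := by
  have h01 := vanish_I0 m (ph1 m) (lin1 m hm) (ph1_fD m)
  have h02 := vanish_I0 m (ph2 m) (lin2 m hm) (ph2_fD m)
  have h03 := vanish_I0 m (ph3 m) (lin3 m hm) (ph3_fD m)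
  have hv1 := vanish_contr m hm 1 one_ne_zero (ph1 m) (ker1 m) (hy1_1 m hm)
  have hv2 := vanish_contr m hm 2 (by norm_num) (ph2 m) (ker2 m) (hy1_2 m hm)
  have hv3 := vanish_contr m hm 3 (by norm_num) (ph3 m) (ker3 m) (hy1_3 m hm)
  simp only [Set.mem_insert_iff, Set.mem_singleton_iff] at hi hj
  rcases hi with rfl | rfl | rfl <;> rcases hj with rfl | rfl | rfl
  · exact absurd rfl hij
  · exact final m 1 2 _ (G2 m) h01 hv1 (G2_mem m hm) (by rw [ev_G2_p1 m hm]; norm_num)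
  · exact final m 1 3 _ (G3 m) h01 hv1 (G3_mem m hm) (by rw [ev_G3_p1 m hm]; norm_num)
  · exact final m 2 1 _ (G1 m) h02 hv2 (G1_mem m hm) (by rw [ev_G1_p2 m hm]; norm_num)
  · exact absurd rfl hij
  · exact final m 2 3 _ (G3 m) h02 hv2 (G3_mem m hm) (by rw [ev_G3_p2 m hm]; norm_num)
  · exact final m 3 1 _ (G1 m) h03 hv3 (G1_mem m hm) (by rw [ev_G1_p3 m hm]; norm_num)
  · exact final m 3 2 _ (G2 m) h03 hv3 (G2_mem m hm) (by rw [ev_G2_p3 m hm]; norm_num)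
  · exact absurd rfl hij

end
end
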